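/- arXiv:1907.02960 — 3 statements merged into one kernel-verified Lean document; each statement's English description precedes it below -/
import Mathlib

section
/- Let 𝔤 be the Lie algebra over ℂ with basis {L_m, I_m : m ∈ ℤ} and brackets [L_m, L_n] = (m−n)(L_{m+n} + I_{m+n}), [L_m, I_n] = −(n+1) I_{m+n}, [I_m, I_n] = 0. For n ≥ 0 let ℒ_n denote the ℂ-span of {L_i, I_i : i ≥ n}, a Lie subalgebra of 𝔤. Then the derived series of ℒ₀, defined by ℒ₀^{(0)} = ℒ₀ and ℒ₀^{(k+1)} = [ℒ₀^{(k)}, ℒ₀^{(k)}], satisfies ℒ₀^{(n+1)} ⊆ ℒ_n for all n ≥ 0. -/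
/-- The free ℂ-module on basis `{L_m, I_m : m ∈ ℤ}`, encoded as `(ℤ × Fin 2) →₀ ℂ`
where `(m, 0)` stands for `L_m` and `(m, 1)` stands for `I_m`. -/
abbrev NovikovLoop := (ℤ × Fin 2) →₀ ℂ

/-- The bracket on basis elements: `[L_m, L_n] = (m−n)(L_{m+n} + I_{m+n})`,
`[L_m, I_n] = −(n+1) I_{m+n}`, `[I_m, L_n] = (m+1) I_{m+n}`, `[I_m, I_n] = 0`. -/
noncomputable def novikovBasisBracket : ℤ × Fin 2 → ℤ × Fin 2 → NovikovLoop := fun p q =>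
  if p.2 = 0 ∧ q.2 = 0 then
    Finsupp.single (p.1 + q.1, (0 : Fin 2)) ((p.1 - q.1 : ℤ) : ℂ)
      + Finsupp.single (p.1 + q.1, (1 : Fin 2)) ((p.1 - q.1 : ℤ) : ℂ)
  else if p.2 = 0 ∧ q.2 = 1 then
    Finsupp.single (p.1 + q.1, (1 : Fin 2)) (-((q.1 + 1 : ℤ) : ℂ))
  else if p.2 = 1 ∧ q.2 = 0 then
    Finsupp.single (p.1 + q.1, (1 : Fin 2)) ((p.1 + 1 : ℤ) : ℂ)
  else 0

/-- The ℂ-bilinear extension of the bracket on basis elements. -/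
noncomputable def novikovBracket (x y : NovikovLoop) : NovikovLoop :=
  x.sum fun p c => y.sum fun q d => (c * d) • novikovBasisBracket p q

/-- `ℒ_n`: the ℂ-span of `{L_i, I_i : i ≥ n}`. -/
noncomputable def filtL (n : ℕ) : Submodule ℂ NovikovLoop :=
  Submodule.span ℂ
    {v : NovikovLoop | ∃ (m : ℤ) (i : Fin 2), (n : ℤ) ≤ m ∧ v = Finsupp.single (m, i) (1 : ℂ)}

/-- The derived series of `ℒ₀`: `ℒ₀⁽⁰⁾ = ℒ₀` and `ℒ₀⁽ᵏ⁺¹⁾ = [ℒ₀⁽ᵏ⁾, ℒ₀⁽ᵏ⁾]`. -/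
noncomputable def derivedL : ℕ → Submodule ℂ NovikovLoop
  | 0 => filtL 0
  | k + 1 =>
      Submodule.span ℂ
        {v : NovikovLoop | ∃ x ∈ derivedL k, ∃ y ∈ derivedL k, v = novikovBracket x y}

/- ### Auxiliary material for the proof -/

lemma bb_LL (m n : ℤ) : novikovBasisBracket (m, 0) (n, 0) =
    Finsupp.single (m + n, (0 : Fin 2)) ((m - n : ℤ) : ℂ)
      + Finsupp.single (m + n, (1 : Fin 2)) ((m - n : ℤ) : ℂ) := rfl
lemma bb_LI (m n : ℤ) : novikovBasisBracket (m, 0) (n, 1) =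
    Finsupp.single (m + n, (1 : Fin 2)) (-((n + 1 : ℤ) : ℂ)) := rfl
lemma bb_IL (m n : ℤ) : novikovBasisBracket (m, 1) (n, 0) =
    Finsupp.single (m + n, (1 : Fin 2)) ((m + 1 : ℤ) : ℂ) := rfl
lemma bb_II (m n : ℤ) : novikovBasisBracket (m, 1) (n, 1) = 0 := rfl

/-- Case dispatch for membership of a basis bracket in a submodule. -/
lemma bb_mem_cases {U : Submodule ℂ NovikovLoop} {m n : ℤ} (i j : Fin 2)
    (h0 : Finsupp.single (m + n, (0 : Fin 2)) ((m - n : ℤ) : ℂ) ∈ U)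
    (h1 : ∀ c : ℂ, Finsupp.single (m + n, (1 : Fin 2)) c ∈ U) :
    novikovBasisBracket (m, i) (n, j) ∈ U := by
  fin_cases i <;> fin_cases j
  · show novikovBasisBracket (m, 0) (n, 0) ∈ U
    rw [bb_LL]; exact add_mem h0 (h1 _)
  · show novikovBasisBracket (m, 0) (n, 1) ∈ U
    rw [bb_LI]; exact h1 _
  · show novikovBasisBracket (m, 1) (n, 0) ∈ U
    rw [bb_IL]; exact h1 _
  · show novikovBasisBracket (m, 1) (n, 1) ∈ U
    rw [bb_II]; exact zero_mem _

/-- The bracket as a bilinear map (auxiliary, inner layer). -/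
noncomputable def brAux (p : ℤ × Fin 2) : NovikovLoop →ₗ[ℂ] NovikovLoop :=
  Finsupp.lsum ℂ fun q => LinearMap.toSpanSingleton ℂ NovikovLoop (novikovBasisBracket p q)

/-- The bracket as a bilinear map. -/
noncomputable def Br : NovikovLoop →ₗ[ℂ] NovikovLoop →ₗ[ℂ] NovikovLoop :=
  Finsupp.lsum ℂ fun p => LinearMap.toSpanSingleton ℂ (NovikovLoop →ₗ[ℂ] NovikovLoop) (brAux p)

lemma novikovBracket_eq (x y : NovikovLoop) : novikovBracket x y = Br x y := by
  simp [novikovBracket, Br, brAux, Finsupp.lsum_apply, LinearMap.toSpanSingleton_apply,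
    Finsupp.sum_apply', LinearMap.smul_apply, Finsupp.smul_sum, smul_smul]

lemma novikovBracket_single (p q : ℤ × Fin 2) :
    novikovBracket (Finsupp.single p 1) (Finsupp.single q 1) = novikovBasisBracket p q := by
  simp [novikovBracket, Finsupp.sum_single_index]

/-- The generating set of the intermediate filtration
`ℳ_k = span{I_m : m ≥ k} + ℒ_{k+1}`. -/
def MS (k : ℕ) : Set NovikovLoop :=
  {v | ∃ m : ℤ, (k : ℤ) ≤ m ∧ v = Finsupp.single (m, (1 : Fin 2)) (1 : ℂ)} ∪
  {v | ∃ (m : ℤ) (i : Fin 2), (k : ℤ) + 1 ≤ m ∧ v = Finsupp.single (m, i) (1 : ℂ)}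

noncomputable def Mfilt (k : ℕ) : Submodule ℂ NovikovLoop := Submodule.span ℂ (MS k)

lemma single_eq_smul (a : ℤ × Fin 2) (c : ℂ) :
    Finsupp.single a c = c • Finsupp.single a (1 : ℂ) := by
  rw [Finsupp.smul_single, smul_eq_mul, mul_one]

lemma single_mem_filtL {n : ℕ} {m : ℤ} (i : Fin 2) (c : ℂ) (h : (n : ℤ) ≤ m) :
    Finsupp.single (m, i) c ∈ filtL n := by
  rw [single_eq_smul]
  exact Submodule.smul_mem _ _ (Submodule.subset_span ⟨m, i, h, rfl⟩)

lemma singleI_mem_Mfilt {k : ℕ} {m : ℤ} (c : ℂ) (h : (k : ℤ) ≤ m) :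
    Finsupp.single (m, (1 : Fin 2)) c ∈ Mfilt k := by
  rw [single_eq_smul]
  exact Submodule.smul_mem _ _ (Submodule.subset_span (Or.inl ⟨m, h, rfl⟩))

lemma single_mem_Mfilt {k : ℕ} {m : ℤ} (i : Fin 2) (c : ℂ) (h : (k : ℤ) + 1 ≤ m) :
    Finsupp.single (m, i) c ∈ Mfilt k := by
  rw [single_eq_smul]
  exact Submodule.smul_mem _ _ (Submodule.subset_span (Or.inr ⟨m, i, h, rfl⟩))

lemma Mfilt_le_filtL (k : ℕ) : Mfilt k ≤ filtL k := by
  rw [Mfilt, Submodule.span_le]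
  rintro v (⟨m, hm, rfl⟩ | ⟨m, i, hm, rfl⟩)
  · exact single_mem_filtL _ _ hm
  · exact single_mem_filtL _ _ (by omega)

/-- Pushing a bracket of spans into a submodule, via bilinearity. -/
lemma span_bracket_le {S T : Set NovikovLoop} {P Q U : Submodule ℂ NovikovLoop}
    (hP : P ≤ Submodule.span ℂ S) (hQ : Q ≤ Submodule.span ℂ T)
    (h : ∀ s ∈ S, ∀ t ∈ T, novikovBracket s t ∈ U) :
    Submodule.span ℂ {v : NovikovLoop | ∃ x ∈ P, ∃ y ∈ Q, v = novikovBracket x y} ≤ U := by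
  have key : ∀ x ∈ Submodule.span ℂ S, ∀ y ∈ Submodule.span ℂ T, Br x y ∈ U := by
    intro x hx
    induction hx using Submodule.span_induction with
    | mem s hs =>
        intro y hy
        induction hy using Submodule.span_induction with
        | mem t ht => rw [← novikovBracket_eq]; exact h s hs t ht
        | zero => simp
        | add a b _ _ ha hb => rw [map_add]; exact add_mem ha hb
        | smul c a _ ha => rw [map_smul]; exact Submodule.smul_mem _ _ ha
    | zero => intro y hy; simp
    | add a b _ _ ha hb =>
        intro y hy
        rw [map_add, LinearMap.add_apply]; exact add_mem (ha y hy) (hb y hy)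
    | smul c a _ ha =>
        intro y hy
        rw [map_smul, LinearMap.smul_apply]; exact Submodule.smul_mem _ _ (ha y hy)
  rw [Submodule.span_le]
  rintro v ⟨x, hx, y, hy, rfl⟩
  rw [novikovBracket_eq]
  exact key x (hP hx) y (hQ hy)

/-- Base step: `[ℒ₀, ℒ₀] ⊆ ℳ₀`. -/
lemma basis_bracket_base {m n : ℤ} (i j : Fin 2) (hm : (0 : ℤ) ≤ m) (hn : (0 : ℤ) ≤ n) :
    novikovBasisBracket (m, i) (n, j) ∈ Mfilt 0 := by
  refine bb_mem_cases i j ?_ fun c => singleI_mem_Mfilt c (by omega)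
  rcases eq_or_lt_of_le (by omega : (0 : ℤ) ≤ m + n) with h | h
  · have hmn : m = n := by omega
    simp [hmn]
  · exact single_mem_Mfilt _ _ (by omega)

/-- Inductive step: `[ℳ_k, ℳ_k] ⊆ ℳ_{k+1}`. -/
lemma basis_bracket_step {k : ℕ} : ∀ s ∈ MS k, ∀ t ∈ MS k,
    novikovBracket s t ∈ Mfilt (k + 1) := by
  rintro s (⟨m, hm, rfl⟩ | ⟨m, i, hm, rfl⟩) t (⟨n, hn, rfl⟩ | ⟨n, j, hn, rfl⟩) <;>
    rw [novikovBracket_single]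
  · rw [bb_II]; exact zero_mem _
  · fin_cases j
    · show novikovBasisBracket (m, 1) (n, 0) ∈ Mfilt (k + 1)
      rw [bb_IL]; exact singleI_mem_Mfilt _ (by push_cast; omega)
    · show novikovBasisBracket (m, 1) (n, 1) ∈ Mfilt (k + 1)
      rw [bb_II]; exact zero_mem _
  · fin_cases i
    · show novikovBasisBracket (m, 0) (n, 1) ∈ Mfilt (k + 1)
      rw [bb_LI]; exact singleI_mem_Mfilt _ (by push_cast; omega)
    · show novikovBasisBracket (m, 1) (n, 1) ∈ Mfilt (k + 1)
      rw [bb_II]; exact zero_mem _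
  · exact bb_mem_cases i j (single_mem_Mfilt _ _ (by push_cast; omega))
      fun c => singleI_mem_Mfilt c (by push_cast; omega)

lemma derivedL_le_Mfilt : ∀ n : ℕ, derivedL (n + 1) ≤ Mfilt n := by
  intro n
  induction n with
  | zero =>
      show Submodule.span ℂ _ ≤ _
      refine span_bracket_le (P := filtL 0) (Q := filtL 0) le_rfl le_rfl ?_
      rintro s ⟨m, i, hm, rfl⟩ t ⟨n, j, hn, rfl⟩
      rw [novikovBracket_single]
      exact basis_bracket_base i j (by exact_mod_cast hm) (by exact_mod_cast hn)
  | succ k ih =>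
      show Submodule.span ℂ _ ≤ _
      exact span_bracket_le (S := MS k) (T := MS k) ih ih basis_bracket_step

/-- In the Lie algebra `L(𝒩)` associated with the 2-dimensional Novikov algebra,
the derived series of `ℒ₀` satisfies `ℒ₀⁽ⁿ⁺¹⁾ ⊆ ℒ_n` for all `n ≥ 0`. -/
theorem derivedL_succ_le_filtL : ∀ n : ℕ, derivedL (n + 1) ≤ filtL n :=
  fun n => (derivedL_le_Mfilt n).trans (Mfilt_le_filtL n)
end

section
/- Let Δ, Δ̄ ∈ ℂ and let g ∈ ℂ[∂, λ] be a nonzero polynomial, homogeneous of total degree n in ∂ and λ, satisfying the identity (H3): −μ·g(∂, λ+μ) = (∂+Δ̄λ)·g(∂+λ, μ) − (∂+μ+Δλ)·g(∂, μ) in ℂ[∂, λ, μ]. Then Δ − Δ̄ = n. -/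
open MvPolynomial

/-- For `g = g(∂, λ) ∈ ℂ[∂, λ]` (variables `0 = ∂`, `1 = λ`), `subst a b g` is the
polynomial `g(a, b) ∈ ℂ[∂, λ, μ]` obtained by substituting `a` for `∂` and `b` for `λ`. -/
noncomputable def subst (a b : MvPolynomial (Fin 3) ℂ) (f : MvPolynomial (Fin 2) ℂ) :
    MvPolynomial (Fin 3) ℂ :=
  aeval ![a, b] f

/-- Chain rule for `subst`. -/
lemma pderiv_subst (i : Fin 3) (a b : MvPolynomial (Fin 3) ℂ) (p : MvPolynomial (Fin 2) ℂ) :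
    pderiv i (subst a b p)
      = subst a b (pderiv 0 p) * pderiv i a + subst a b (pderiv 1 p) * pderiv i b := by
  unfold subst
  induction p using MvPolynomial.induction_on with
  | C c => simp
  | add p q hp hq => simp only [map_add, hp, hq]; ring
  | mul_X p j hp =>
      fin_cases j <;>
        simp only [map_mul, aeval_X, pderiv_mul, hp, pderiv_X, Matrix.cons_val_zero,
          Matrix.cons_val_one, Matrix.head_cons] <;>
        simp [Pi.single_apply, Fin.ext_iff] <;> ring

lemma X_mul_pderiv_monomial (j : Fin 2) (d : Fin 2 →₀ ℕ) (c : ℂ) :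
    X j * pderiv j (monomial d c) = monomial d (c * d j) := by
  rw [pderiv_monomial]
  rcases Nat.eq_zero_or_pos (d j) with h | h
  · simp [h]
  · rw [X, monomial_mul, one_mul, add_tsub_cancel_of_le]
    rwa [Finsupp.single_le_iff]

/-- Euler's identity for homogeneous polynomials in two variables. -/
lemma euler {n : ℕ} (p : MvPolynomial (Fin 2) ℂ) (hp : p.IsHomogeneous n) :
    X 0 * pderiv 0 p + X 1 * pderiv 1 p = C (n : ℂ) * p := by
  conv_lhs => rw [p.as_sum]
  rw [map_sum, map_sum, Finset.mul_sum, Finset.mul_sum, ← Finset.sum_add_distrib]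
  conv_rhs => rw [p.as_sum, Finset.mul_sum]
  refine Finset.sum_congr rfl fun d hd => ?_
  rw [X_mul_pderiv_monomial, X_mul_pderiv_monomial, ← map_add, ← mul_add, C_mul_monomial]
  congr 1
  have h2 := hp (mem_support_iff.mp hd)
  rw [Finsupp.weight_apply] at h2
  rw [← h2, Finsupp.sum_fintype _ _ (by simp), Fin.sum_univ_two]
  simp only [Pi.one_apply, smul_eq_mul, mul_one]
  push_cast
  ring

lemma subst_comp (f : Fin 3 → MvPolynomial (Fin 2) ℂ) (a b : MvPolynomial (Fin 3) ℂ)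
    (p : MvPolynomial (Fin 2) ℂ) :
    aeval f (subst a b p) = aeval ![aeval f a, aeval f b] p := by
  unfold subst
  induction p using MvPolynomial.induction_on with
  | C c => simp
  | add p q hp hq => simp only [map_add, hp, hq]
  | mul_X p j hp =>
      fin_cases j <;>
        simp only [map_mul, aeval_X, Matrix.cons_val_zero, Matrix.cons_val_one,
          Matrix.head_cons, hp] <;> rfl

lemma subst_id (p : MvPolynomial (Fin 2) ℂ) :
    aeval ![(X 0 : MvPolynomial (Fin 2) ℂ), X 1] p = p := by
  have h : ![(X 0 : MvPolynomial (Fin 2) ℂ), X 1] = X := by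
    funext i; fin_cases i <;> rfl
  rw [h, aeval_X_left, AlgHom.id_apply]

lemma subst_id' (p : MvPolynomial (Fin 2) ℂ) :
    bind₁ ![(X 0 : MvPolynomial (Fin 2) ℂ), X 1] p = p :=
  subst_id p

/-- If `g ∈ ℂ[∂, λ]` is nonzero, homogeneous of total degree `n`, and satisfies
(H3): `−μ·g(∂, λ+μ) = (∂+Δ̄λ)·g(∂+λ, μ) − (∂+μ+Δλ)·g(∂, μ)` in `ℂ[∂, λ, μ]`
(variables `0 = ∂`, `1 = λ`, `2 = μ`), then `Δ − Δ̄ = n`. -/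
theorem H3_forces_degree (Δ Δ' : ℂ) (n : ℕ) (g : MvPolynomial (Fin 2) ℂ) (hg : g ≠ 0)
    (hhom : g.IsHomogeneous n)
    (hH3 : -(X 2) * subst (X 0) (X 1 + X 2) g
        = (X 0 + C Δ' * X 1) * subst (X 0 + X 1) (X 2) g
          - (X 0 + X 2 + C Δ * X 1) * subst (X 0) (X 2) g) :
    Δ - Δ' = (n : ℂ) := by
  have hd := congrArg (fun q : MvPolynomial (Fin 3) ℂ =>
    aeval ![(X 0 : MvPolynomial (Fin 2) ℂ), 0, X 1] (pderiv (1 : Fin 3) q)) hH3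
  simp only [pderiv_mul, pderiv_subst, map_add, map_mul, map_sub, map_neg, map_one, map_zero,
    pderiv_X, pderiv_C, subst_comp, aeval_X, aeval_C, Matrix.cons_val_zero, Matrix.cons_val_one,
    Matrix.head_cons, Matrix.cons_val_two, Matrix.tail_cons, Pi.single_apply, Fin.ext_iff] at hd
  norm_num at hd
  rw [subst_id', subst_id', subst_id'] at hd
  have he := euler g hhom
  have hkey : C (Δ' - Δ + (n : ℂ)) * g = 0 := by
    rw [map_add, map_sub]
    linear_combination -hd - he
  rcases mul_eq_zero.mp hkey with h | h
  · have h0 : Δ' - Δ + (n : ℂ) = 0 := by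
      rwa [MvPolynomial.C_eq_zero] at h
    linear_combination -h0
  · exact absurd h hg
end

section
/- Let Δ, Δ̄ ∈ ℂ with Δ̄ ≠ 0 and Δ − Δ̄ = 3. Suppose g ∈ ℂ[∂, λ] is homogeneous of total degree 3, f ∈ ℂ[∂, λ], and both identities hold in ℂ[∂, λ, μ]: (L3): (λ−μ)·(f(∂, λ+μ) + g(∂, λ+μ)) = (∂+λ+Δμ)·f(∂, λ) + (∂+Δ̄λ)·f(∂+λ, μ) − (∂+μ+Δλ)·f(∂, μ) − (∂+Δ̄μ)·f(∂+μ, λ), and (H3): −μ·g(∂, λ+μ) = (∂+Δ̄λ)·g(∂+λ, μ) − (∂+μ+Δλ)·g(∂, μ). Then g = 0. -/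
open MvPolynomial

lemma fin2_finsupp (m : Fin 2 →₀ ℕ) :
    m = Finsupp.single 0 (m 0) + Finsupp.single 1 (m 1) := by
  ext i
  fin_cases i <;> simp

lemma fs2_inj {i j i' j' : ℕ} :
    (Finsupp.single (0 : Fin 2) i + Finsupp.single 1 j
      = Finsupp.single 0 i' + Finsupp.single 1 j') ↔ i = i' ∧ j = j' := by
  constructor
  · intro h
    constructor
    · have := DFunLike.congr_fun h 0
      simpa using this
    · have := DFunLike.congr_fun h 1
      simpa using this
  · rintro ⟨rfl, rfl⟩
    rfl

lemma coeff_sm (i j : ℕ) (r : ℂ) (m : Fin 2 →₀ ℕ) :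
    coeff m (C r * X 0 ^ i * X 1 ^ j : MvPolynomial (Fin 2) ℂ)
      = if Finsupp.single 0 i + Finsupp.single 1 j = m then r else 0 := by
  rw [mul_assoc, X_pow_eq_monomial, X_pow_eq_monomial, monomial_mul, mul_one,
    C_mul_monomial, mul_one, coeff_monomial]

lemma degree_fin2 (m : Fin 2 →₀ ℕ) : m.degree = m 0 + m 1 := by
  rw [show m.degree = ∑ i ∈ m.support, m i from rfl, Finset.sum_subset (Finset.subset_univ m.support)]
  · exact Fin.sum_univ_two m
  · intro x _ hx
    simpa using (Finsupp.notMem_support_iff.mp hx)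

lemma eval_subst (v : Fin 3 → ℂ) (A B : MvPolynomial (Fin 3) ℂ)
    (h : MvPolynomial (Fin 2) ℂ) :
    eval v (subst A B h) = eval ![eval v A, eval v B] h := by
  induction h using MvPolynomial.induction_on with
  | C r => simp [subst]
  | add p q hp hq => simp [subst, map_add] at hp hq ⊢; rw [hp, hq]
  | mul_X p i hp =>
      simp only [subst, map_mul, aeval_X] at hp ⊢
      rw [hp]
      fin_cases i <;> simp

lemma rep3 (g : MvPolynomial (Fin 2) ℂ) (hhom : g.IsHomogeneous 3) :
    g = C (coeff (Finsupp.single 0 3 + Finsupp.single 1 0) g) * X 0 ^ 3 * X 1 ^ 0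
      + C (coeff (Finsupp.single 0 2 + Finsupp.single 1 1) g) * X 0 ^ 2 * X 1 ^ 1
      + C (coeff (Finsupp.single 0 1 + Finsupp.single 1 2) g) * X 0 ^ 1 * X 1 ^ 2
      + C (coeff (Finsupp.single 0 0 + Finsupp.single 1 3) g) * X 0 ^ 0 * X 1 ^ 3 := by
  apply MvPolynomial.ext
  intro m
  rw [coeff_add, coeff_add, coeff_add, coeff_sm, coeff_sm, coeff_sm, coeff_sm]
  by_cases hdeg : m 0 + m 1 = 3
  · have hm := fin2_finsupp m
    have h0 : m 0 = 0 ∨ m 0 = 1 ∨ m 0 = 2 ∨ m 0 = 3 := by omega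
    rcases h0 with h | h | h | h <;>
    · have h1 : m 1 = 3 - m 0 := by omega
      rw [h] at h1
      norm_num at h1
      rw [hm, h, h1]
      simp [Finsupp.ext_iff, Fin.forall_fin_two, Finsupp.single_apply]
  · have hz : coeff m g = 0 := hhom.coeff_eq_zero (by rw [degree_fin2]; exact hdeg)
    have key : ∀ i j : ℕ, i + j = 3 →
        ¬(Finsupp.single (0 : Fin 2) i + Finsupp.single 1 j = m) := by
      intro i j hij hEq
      rw [fin2_finsupp m, fs2_inj] at hEq
      omega
    rw [hz, if_neg (key 3 0 (by norm_num)), if_neg (key 2 1 (by norm_num)),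
      if_neg (key 1 2 (by norm_num)), if_neg (key 0 3 (by norm_num))]
    norm_num

/-- Let `Δ̄ ≠ 0` with `Δ − Δ̄ = 3`. If `g ∈ ℂ[∂, λ]` is homogeneous of total degree 3,
`f ∈ ℂ[∂, λ]`, and the pair `(f, g)` satisfies
(L3): `(λ−μ)·(f(∂,λ+μ) + g(∂,λ+μ)) = (∂+λ+Δμ)·f(∂,λ) + (∂+Δ̄λ)·f(∂+λ,μ)
− (∂+μ+Δλ)·f(∂,μ) − (∂+Δ̄μ)·f(∂+μ,λ)` and
(H3): `−μ·g(∂,λ+μ) = (∂+Δ̄λ)·g(∂+λ,μ) − (∂+μ+Δλ)·g(∂,μ)` in `ℂ[∂, λ, μ]`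
(variables `0 = ∂`, `1 = λ`, `2 = μ`), then `g = 0`: there is no nontrivial extension
with nonzero `I`-cocycle when `Δ − Δ̄ = 3`. -/
theorem no_cocycle_delta_difference_three (Δ Δ' : ℂ) (hΔ' : Δ' ≠ 0) (hd : Δ - Δ' = 3)
    (f g : MvPolynomial (Fin 2) ℂ) (hhom : g.IsHomogeneous 3)
    (hL3 : (X 1 - X 2) * (subst (X 0) (X 1 + X 2) f + subst (X 0) (X 1 + X 2) g)
        = (X 0 + X 1 + C Δ * X 2) * subst (X 0) (X 1) f
          + (X 0 + C Δ' * X 1) * subst (X 0 + X 1) (X 2) f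
          - (X 0 + X 2 + C Δ * X 1) * subst (X 0) (X 2) f
          - (X 0 + C Δ' * X 2) * subst (X 0 + X 2) (X 1) f)
    (hH3 : -(X 2) * subst (X 0) (X 1 + X 2) g
        = (X 0 + C Δ' * X 1) * subst (X 0 + X 1) (X 2) g
          - (X 0 + X 2 + C Δ * X 1) * subst (X 0) (X 2) g) :
    g = 0 := by
  have hΔe : Δ = Δ' + 3 := by linear_combination hd
  subst hΔe
  have hrep := rep3 g hhom
  set a := coeff (Finsupp.single 0 3 + Finsupp.single 1 0) g with ha_def
  set b := coeff (Finsupp.single 0 2 + Finsupp.single 1 1) g with hb_def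
  set c := coeff (Finsupp.single 0 1 + Finsupp.single 1 2) g with hc_def
  set e := coeff (Finsupp.single 0 0 + Finsupp.single 1 3) g with he_def
  have hgval : ∀ x y : ℂ, eval ![x, y] g = a*x^3 + b*x^2*y + c*x*y^2 + e*y^3 := by
    intro x y
    rw [hrep]
    simp
  have hHs : ∀ x l m : ℂ,
      -(m * (a*x^3 + b*x^2*(l+m) + c*x*(l+m)^2 + e*(l+m)^3))
        = (x + Δ'*l) * (a*(x+l)^3 + b*(x+l)^2*m + c*(x+l)*m^2 + e*m^3)
          - (x + m + (Δ'+3)*l) * (a*x^3 + b*x^2*m + c*x*m^2 + e*m^3) := by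
    intro x l m
    have h := congrArg (eval ![x, l, m]) hH3
    simp only [map_mul, map_add, map_sub, map_neg, eval_X, eval_C, eval_subst, hgval,
      Matrix.cons_val_zero, Matrix.cons_val_one, Matrix.head_cons, Matrix.cons_val_two,
      Matrix.tail_cons] at h
    linear_combination h
  have hLs : ∀ x l m : ℂ,
      (l - m) * (eval ![x, l+m] f + (a*x^3 + b*x^2*(l+m) + c*x*(l+m)^2 + e*(l+m)^3))
        = (x + l + (Δ'+3)*m) * eval ![x, l] f + (x + Δ'*l) * eval ![x+l, m] f
          - (x + m + (Δ'+3)*l) * eval ![x, m] f - (x + Δ'*m) * eval ![x+m, l] f := by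
    intro x l m
    have h := congrArg (eval ![x, l, m]) hL3
    simp only [map_mul, map_add, map_sub, map_neg, eval_X, eval_C, eval_subst, hgval,
      Matrix.cons_val_zero, Matrix.cons_val_one, Matrix.head_cons, Matrix.cons_val_two,
      Matrix.tail_cons] at h
    linear_combination h
  have Q1 := hLs 0 1 0; norm_num at Q1
  have Q2 := hLs 0 2 0; norm_num at Q2
  have Q3 := hLs 0 3 0; norm_num at Q3
  have Q4 := hLs 0 4 0; norm_num at Q4
  have Q5 := hLs 0 5 0; norm_num at Q5
  have T1 := hLs 1 1 0; norm_num at T1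
  have T2 := hLs 2 1 0; norm_num at T2
  have T3 := hLs 3 1 0; norm_num at T3
  have T4 := hLs 4 1 0; norm_num at T4
  have H1 := hHs 1 1 1
  have H2 := hHs 1 2 1
  have H3 := hHs 2 1 1
  have H4 := hHs 1 1 2
  have H5 := hHs 1 2 2
  have H6 := hHs 2 2 1
  have ha : a = 0 := by
    linear_combination (3/2 : ℂ)*H1 - (1/8 : ℂ)*H2 - (5/6 : ℂ)*H3 - (1/24 : ℂ)*H5 + (1/8 : ℂ)*H6
  have hb2 : Δ'^2 * b = 0 := by
    linear_combination
      Δ'*(4*H1 + (1/4 : ℂ)*H2 - (1/4 : ℂ)*H5 - (1/4 : ℂ)*H6)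
      - (1+3*Δ')*(H1 - (1/4 : ℂ)*H2 - H4 + (1/4 : ℂ)*H5)
      + (-13/3 : ℂ)*(Δ'*T1 - ((1+Δ')/2)*Q2 + (4+Δ')*Q1)
      + (19/2 : ℂ)*(Δ'*T2 - ((2+Δ')/3)*Q3 + ((5+Δ')/2)*Q2)
      + (-7 : ℂ)*(Δ'*T3 - ((3+Δ')/4)*Q4 + ((6+Δ')/3)*Q3)
      + (11/6 : ℂ)*(Δ'*T4 - ((4+Δ')/5)*Q5 + ((7+Δ')/4)*Q4)
  have hb : b = 0 := (mul_eq_zero.mp hb2).resolve_left (pow_ne_zero 2 hΔ')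
  have he : e = 0 := by
    linear_combination (-1 : ℂ)*H1 + (1/4 : ℂ)*H2 + H4 - (1/4 : ℂ)*H5 - Δ'*hb
  have hc : c = 0 := by
    linear_combination (-4 : ℂ)*H1 - (1/4 : ℂ)*H2 + (1/4 : ℂ)*H5 + (1/4 : ℂ)*H6 - (1+2*Δ')*hb
  rw [hrep, ha, hb, hc, he]
  simp
end
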